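/- arXiv:1507.04812 — 2 statements merged into one kernel-verified Lean document; each statement's English description precedes it below -/
import Mathlib

section
/- Suppose w is an A* weight on [-1,1] with A* constant L*, M ∈ ℕ, and for each 1 ≤ i ≤ M one has z_i ∈ [-1,1], γ_i ≥ 0, and Γ_i ∈ ℝ if γ_i > 0 or Γ_i ≤ 0 if γ_i = 0. Then the weight w̃(x) := w(x) ∏_{i=1}^M |x-z_i|^{γ_i} (ln(e/|x-z_i|))^{Γ_i} is an A* weight on [-1,1] with an A* constant depending only on the γ_i's, the Γ_i's, and L*. -/
open MeasureTheory Set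
open scoped BigOperators

noncomputable section

/-- `φ(x) = √(1 - x²)`. -/
def phi (x : ℝ) : ℝ := Real.sqrt (1 - x ^ 2)

/-- `ρ(h, x) = hφ(x) + h²`. -/
def rho (h x : ℝ) : ℝ := h * phi x + h ^ 2

/-- `ρ_n(x) = φ(x)/n + 1/n²`. -/
def rhoN (n : ℕ) (x : ℝ) : ℝ := phi x / n + 1 / (n : ℝ) ^ 2

/-- The averaged weight `w_n(x) = ρ_n(x)⁻¹ ∫_{x-ρ_n(x)}^{x+ρ_n(x)} w(u) du`. -/
def wAvg (w : ℝ → ℝ) (n : ℕ) (x : ℝ) : ℝ :=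
  (rhoN n x)⁻¹ * ∫ u in (x - rhoN n x)..(x + rhoN n x), w u

/-- Essential sup norm of `g` on `S ⊆ ℝ`. -/
def supNorm (g : ℝ → ℝ) (S : Set ℝ) : ℝ :=
  essSup (fun x => |g x|) (volume.restrict S)

/-- `w` is an A* weight on `[-1,1]` with A* constant `L`: nonnegative, integrable, and
`w(x) ≤ (L/|I|) ∫_I w` for every interval `I ⊆ [-1,1]` and every `x ∈ I`. -/
def AStarWith (w : ℝ → ℝ) (L : ℝ) : Prop :=
  0 < L ∧ (∀ x, 0 ≤ w x) ∧ IntegrableOn w (Icc (-1 : ℝ) 1) ∧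
    ∀ a b : ℝ, -1 ≤ a → a < b → b ≤ 1 → ∀ x ∈ Icc a b,
      w x ≤ L / (b - a) * ∫ u in a..b, w u

/-- `w` is an A* weight. -/
def AStar (w : ℝ → ℝ) : Prop := ∃ L : ℝ, AStarWith w L

/-- `w` vanishes outside `[-1,1]` (weights are extended by zero outside `[-1,1]`). -/
def ZeroOutside (w : ℝ → ℝ) : Prop := ∀ x, x ∉ Icc (-1 : ℝ) 1 → w x = 0

/-- `g` is (the function given by) an algebraic polynomial of degree `≤ n - 1`,
i.e. `g ∈ 𝒫_n`. -/
def IsPolyDeg (n : ℕ) (g : ℝ → ℝ) : Prop :=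
  ∃ p : Polynomial ℝ, p.degree < (n : WithBot ℕ) ∧ ∀ x, g x = p.eval x

/-- Weighted best approximation `E_n(f, S)_w := inf_{q ∈ 𝒫_n} ‖w (f - q)‖_S`. -/
def Edeg (n : ℕ) (f : ℝ → ℝ) (S : Set ℝ) (w : ℝ → ℝ) : ℝ :=
  sInf {v : ℝ | ∃ q : ℝ → ℝ, IsPolyDeg n q ∧ v = supNorm (fun x => w x * (f x - q x)) S}

/-- `f ∈ L∞^w`, i.e. `‖w f‖_{[-1,1]} < ∞`. -/
def MemLinftyW (w f : ℝ → ℝ) : Prop :=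
  ∃ C : ℝ, ∀ᵐ x ∂(volume.restrict (Icc (-1 : ℝ) 1)), |w x * f x| ≤ C

/-- `Z_{A,h}^j := {x ∈ [-1,1] : |x - z_j| ≤ A ρ(h, z_j)}`. -/
def Zj (M : ℕ) (z : Fin M → ℝ) (A h : ℝ) (j : Fin M) : Set ℝ :=
  {x ∈ Icc (-1 : ℝ) 1 | |x - z j| ≤ A * rho h (z j)}

/-- `I_{A,h} := {x ∈ [-1,1] : |x - z_j| ≥ A ρ(h, z_j) for all j}`. -/
def Iah (M : ℕ) (z : Fin M → ℝ) (A h : ℝ) : Set ℝ :=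
  {x ∈ Icc (-1 : ℝ) 1 | ∀ j : Fin M, A * rho h (z j) ≤ |x - z j|}

/-- The class `W*(Z)`: `w` is an A* weight and there is `c* > 0` such that
`c* w(y) ≤ w(x) ≤ c*⁻¹ w(y)` whenever `x, y ∈ [-1,1]`, `|x - y| ≤ ρ(ε, x)` and
`dist([x,y], z_j) ≥ ρ(ε, z_j)` for all `j`. -/
def WStar (M : ℕ) (z : Fin M → ℝ) (w : ℝ → ℝ) : Prop :=
  AStar w ∧ ∃ c : ℝ, 0 < c ∧ ∀ ε : ℝ, 0 < ε → ∀ x y : ℝ,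
    x ∈ Icc (-1 : ℝ) 1 → y ∈ Icc (-1 : ℝ) 1 → |x - y| ≤ rho ε x →
    (∀ j : Fin M, ∀ u ∈ uIcc x y, rho ε (z j) ≤ |u - z j|) →
    c * w y ≤ w x ∧ w x ≤ c⁻¹ * w y

open Classical in
/-- The `r`-th symmetric difference `Δ_h^r(f, x, J)`. -/
def symmDiffR (r : ℕ) (h : ℝ) (f : ℝ → ℝ) (x : ℝ) (J : Set ℝ) : ℝ :=
  if Icc (x - r * h / 2) (x + r * h / 2) ⊆ J then
    ∑ i ∈ Finset.range (r + 1),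
      (-1 : ℝ) ^ (r - i) * (r.choose i : ℝ) * f (x - r * h / 2 + i * h)
  else 0

/-- Main part weighted modulus of smoothness
`Ω_φ^r(f, A, t)_w := sup_{0 < h ≤ t} ‖w(·) Δ_{hφ(·)}^r(f, ·, I_{A,h})‖`. -/
def OmegaMod (M : ℕ) (z : Fin M → ℝ) (w f : ℝ → ℝ) (r : ℕ) (A t : ℝ) : ℝ :=
  sSup {v : ℝ | ∃ h : ℝ, 0 < h ∧ h ≤ t ∧
    v = supNorm (fun x => w x * symmDiffR r (h * phi x) f x (Iah M z A h)) (Icc (-1 : ℝ) 1)}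

/-- Restricted main part modulus `Ω_φ^r(f, t)_{S, w}`. -/
def OmegaRest (w f : ℝ → ℝ) (S : Set ℝ) (r : ℕ) (t : ℝ) : ℝ :=
  sSup {v : ℝ | ∃ h : ℝ, 0 < h ∧ h ≤ t ∧
    v = supNorm (fun x => w x * symmDiffR r (h * phi x) f x S) (Icc (-1 : ℝ) 1)}

/-- Complete weighted modulus of smoothness
`ω_φ^r(f, A, B, t)_w := Ω_φ^r(f, A, t)_w + Σ_j E_r(f, Z_{B,t}^j)_w`. -/
def omegaMod (M : ℕ) (z : Fin M → ℝ) (w f : ℝ → ℝ) (r : ℕ) (A B t : ℝ) : ℝ :=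
  OmegaMod M z w f r A t + ∑ j : Fin M, Edeg r f (Zj M z B t j) w

/-- The extended sequence `z_0 = -1, z_1, ..., z_M, z_{M+1} = 1`. -/
def zext (M : ℕ) (z : Fin M → ℝ) (i : Fin (M + 2)) : ℝ :=
  if h : (i : ℕ) = 0 then -1
  else if h2 : (i : ℕ) ≤ M then z ⟨(i : ℕ) - 1, by omega⟩
  else 1

/-- `𝔇`: the smallest positive gap between consecutive points of `-1, z_1, ..., z_M, 1`. -/
def Dgap (M : ℕ) (z : Fin M → ℝ) : ℝ :=
  sInf {d : ℝ | 0 < d ∧ ∃ i : Fin (M + 1), d = zext M z i.succ - zext M z i.castSucc}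

/-- Two-sided equivalence with constants: `c a ≤ b ≤ c' a`. -/
def EquivBy (c c' a b : ℝ) : Prop := c * a ≤ b ∧ b ≤ c' * a

/-- The `r`-th derivative of a polynomial, as a function on `ℝ`. -/
def polyDeriv (r : ℕ) (p : Polynomial ℝ) : ℝ → ℝ :=
  fun x => ((fun q : Polynomial ℝ => Polynomial.derivative q)^[r] p).eval x

/-- The realization functional
`R_{r,φ}(f, t, 𝒫_n)_w := inf_{P ∈ 𝒫_n} (‖w(f - P)‖ + t^r ‖w φ^r P^{(r)}‖)`. -/
def Rfunc (r : ℕ) (f : ℝ → ℝ) (t : ℝ) (n : ℕ) (w : ℝ → ℝ) : ℝ :=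
  sInf {v : ℝ | ∃ p : Polynomial ℝ, p.degree < (n : WithBot ℕ) ∧
    v = supNorm (fun x => w x * (f x - p.eval x)) (Icc (-1 : ℝ) 1) +
      t ^ r * supNorm (fun x => w x * phi x ^ r * polyDeriv r p x) (Icc (-1 : ℝ) 1)}

/-! Fix `I = [a, b] ⊆ [-1, 1]` and `x ∈ I`. The A* condition on `I` itself bounds `w`
pointwise on `I` by `L*/|I| ∫_I w`, so the points of `I` within `δ = |I| / (4(M+1)L*)` of some
`z_i` carry at most half of `∫_I w`. At every other point `u ∈ I` we have
`|x - z_i| ≤ (1 + |I|/δ) |u - z_i|`, and each factor `s ↦ s^γ log(e/s)^Γ` satisfies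
`f(s) ≤ C f(t)` whenever `s ≤ A t` on `[0, 2]`; hence the product `v` of the factors satisfies
`v(x) ≲ v(u)`, and `w(x) v(x) ≲ v(x)/|I| ∫_{far from z} w ≲ 1/|I| ∫_I w v`. -/

def QuasiIncreasingOn (f : ℝ → ℝ) (S : Set ℝ) : Prop :=
  ∀ A, 1 ≤ A → ∃ C, 0 < C ∧ ∀ s ∈ S, ∀ t ∈ S, s ≤ A * t → f s ≤ C * f t

namespace QuasiIncreasingOn

variable {f g : ℝ → ℝ} {S T : Set ℝ}

lemma mono (hf : QuasiIncreasingOn f S) (hTS : T ⊆ S) : QuasiIncreasingOn f T := fun A hA =>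
  let ⟨C, hC, hfC⟩ := hf A hA
  ⟨C, hC, fun s hs t ht => hfC s (hTS hs) t (hTS ht)⟩

lemma congr (hf : QuasiIncreasingOn f S) (hfg : ∀ s ∈ S, f s = g s) :
    QuasiIncreasingOn g S := fun A hA =>
  let ⟨C, hC, hfC⟩ := hf A hA
  ⟨C, hC, fun s hs t ht hst => by simpa only [hfg s hs, hfg t ht] using hfC s hs t ht hst⟩

lemma mul (hf : QuasiIncreasingOn f S) (hg : QuasiIncreasingOn g S)
    (hf0 : ∀ s ∈ S, 0 ≤ f s) (hg0 : ∀ s ∈ S, 0 ≤ g s) :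
    QuasiIncreasingOn (fun s => f s * g s) S := by
  intro A hA
  obtain ⟨C, hC, hfC⟩ := hf A hA
  obtain ⟨D, hD, hgD⟩ := hg A hA
  refine ⟨C * D, mul_pos hC hD, fun s hs t ht hst => ?_⟩
  calc f s * g s ≤ (C * f t) * (D * g t) :=
        mul_le_mul (hfC s hs t ht hst) (hgD s hs t ht hst) (hg0 s hs)
          ((hf0 s hs).trans (hfC s hs t ht hst))
    _ = C * D * (f t * g t) := by ring

lemma rpow (hf : QuasiIncreasingOn f S) (hf0 : ∀ s ∈ S, 0 ≤ f s) {p : ℝ} (hp : 0 ≤ p) :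
    QuasiIncreasingOn (fun s => f s ^ p) S := by
  intro A hA
  obtain ⟨C, hC, hfC⟩ := hf A hA
  refine ⟨C ^ p, Real.rpow_pos_of_pos hC p, fun s hs t ht hst => ?_⟩
  rw [← Real.mul_rpow hC.le (hf0 t ht)]
  exact Real.rpow_le_rpow (hf0 s hs) (hfC s hs t ht hst) hp

end QuasiIncreasingOn

lemma quasiIncreasingOn_rpow_const {γ : ℝ} (hγ : 0 ≤ γ) :
    QuasiIncreasingOn (fun s => s ^ γ) (Ici 0) := by
  intro A hA
  refine ⟨A ^ γ, Real.rpow_pos_of_pos (by linarith) γ, fun s hs t ht hst => ?_⟩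
  rw [← Real.mul_rpow (by linarith) ht]
  exact Real.rpow_le_rpow hs hst hγ

lemma log_exp_one_div {s : ℝ} (hs : 0 < s) : Real.log (Real.exp 1 / s) = 1 - Real.log s := by
  rw [Real.log_div (Real.exp_ne_zero 1) hs.ne', Real.log_exp]

lemma one_sub_log_two_pos : 0 < 1 - Real.log 2 := by
  linarith [Real.log_two_lt_d9]

lemma one_sub_log_two_le_log_exp_one_div {s : ℝ} (hs : 0 < s) (hs2 : s ≤ 2) :
    1 - Real.log 2 ≤ Real.log (Real.exp 1 / s) := by
  rw [log_exp_one_div hs]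
  linarith [Real.log_le_log hs hs2]

lemma log_exp_one_div_nonneg {s : ℝ} (hs : s ∈ Icc (0 : ℝ) 2) :
    0 ≤ Real.log (Real.exp 1 / s) := by
  rcases hs.1.eq_or_lt with rfl | hs0
  · simp
  · exact one_sub_log_two_pos.le.trans (one_sub_log_two_le_log_exp_one_div hs0 hs.2)

lemma quasiIncreasingOn_inv_log_exp_one_div :
    QuasiIncreasingOn (fun s => (Real.log (Real.exp 1 / s))⁻¹) (Icc 0 2) := by
  intro A hA
  have hℓ₀ := one_sub_log_two_pos
  set C := 1 + Real.log A / (1 - Real.log 2)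
  have hC : 1 ≤ C := le_add_of_nonneg_right (div_nonneg (Real.log_nonneg hA) hℓ₀.le)
  refine ⟨C, by linarith, fun s hs t ht hst => ?_⟩
  rcases hs.1.eq_or_lt with rfl | hs0
  · simpa using mul_nonneg (by linarith) (inv_nonneg.2 (log_exp_one_div_nonneg ht))
  have ht0 : 0 < t := pos_of_mul_pos_right (hs0.trans_le hst) (by linarith)
  have hℓs := one_sub_log_two_le_log_exp_one_div hs0 hs.2
  have hℓt := one_sub_log_two_le_log_exp_one_div ht0 ht.2
  have hlog : Real.log s ≤ Real.log A + Real.log t := by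
    rw [← Real.log_mul (by linarith) ht0.ne']
    exact Real.log_le_log hs0 hst
  have hlogA : Real.log A ≤ Real.log (Real.exp 1 / s) * (Real.log A / (1 - Real.log 2)) := by
    rw [mul_div_assoc', le_div_iff₀ hℓ₀]
    nlinarith [Real.log_nonneg hA]
  have hkey : Real.log (Real.exp 1 / t) ≤ C * Real.log (Real.exp 1 / s) := by
    rw [log_exp_one_div ht0] at hℓt ⊢
    rw [log_exp_one_div hs0] at hℓs hlogA ⊢
    linarith
  dsimp only
  rw [← div_eq_mul_inv, le_div_iff₀ (by linarith), inv_mul_le_iff₀ (by linarith)]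
  linarith

lemma quasiIncreasingOn_rpow_mul_log_exp_one_div {δ : ℝ} (hδ : 0 < δ) :
    QuasiIncreasingOn (fun s => s ^ δ * Real.log (Real.exp 1 / s)) (Icc 0 2) := by
  intro A hA
  have hℓ₀ := one_sub_log_two_pos
  refine ⟨A ^ δ + 1 / (δ * (1 - Real.log 2)), by positivity, fun s hs t ht hst => ?_⟩
  rcases hs.1.eq_or_lt with rfl | hs0
  · simpa using mul_nonneg (by positivity)
      (mul_nonneg (Real.rpow_nonneg ht.1 δ) (log_exp_one_div_nonneg ht))
  have ht0 : 0 < t := pos_of_mul_pos_right (hs0.trans_le hst) (by linarith)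
  have hℓt := one_sub_log_two_le_log_exp_one_div ht0 ht.2
  have hsδ : s ^ δ ≤ A ^ δ * t ^ δ := by
    rw [← Real.mul_rpow (by linarith) ht.1]
    exact Real.rpow_le_rpow hs.1 hst hδ.le
  -- `log y ≤ y - 1` applied to `y = t ^ δ / s ^ δ`
  have hgap : s ^ δ * (Real.log t - Real.log s) ≤ t ^ δ / δ := by
    have hpos : 0 < s ^ δ := Real.rpow_pos_of_pos hs0 δ
    have h := Real.log_le_sub_one_of_pos (div_pos (Real.rpow_pos_of_pos ht0 δ) hpos)
    rw [Real.log_div (Real.rpow_pos_of_pos ht0 δ).ne' hpos.ne', Real.log_rpow ht0,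
      Real.log_rpow hs0, ← mul_sub, le_sub_iff_add_le, le_div_iff₀ hpos] at h
    rw [le_div_iff₀ hδ]
    nlinarith [Real.rpow_pos_of_pos ht0 δ]
  have htδ : t ^ δ / δ ≤ 1 / (δ * (1 - Real.log 2)) * (t ^ δ * Real.log (Real.exp 1 / t)) := by
    rw [div_mul_eq_mul_div, one_mul, div_le_div_iff₀ hδ (by positivity)]
    nlinarith [mul_le_mul_of_nonneg_left hℓt (mul_nonneg (Real.rpow_nonneg ht.1 δ) hδ.le)]
  have hsplit :
      Real.log (Real.exp 1 / s) = Real.log (Real.exp 1 / t) + (Real.log t - Real.log s) := by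
    rw [log_exp_one_div hs0, log_exp_one_div ht0]; ring
  dsimp only
  rw [hsplit, mul_add]
  calc s ^ δ * Real.log (Real.exp 1 / t) + s ^ δ * (Real.log t - Real.log s)
      ≤ A ^ δ * t ^ δ * Real.log (Real.exp 1 / t) + t ^ δ / δ := by
        gcongr
        exact log_exp_one_div_nonneg ht
    _ ≤ _ := by linarith

lemma quasiIncreasingOn_rpow_mul_log_exp_one_div_rpow {γ Γ : ℝ} (hγ : 0 ≤ γ)
    (hΓ : γ = 0 → Γ ≤ 0) :
    QuasiIncreasingOn (fun s => s ^ γ * Real.log (Real.exp 1 / s) ^ Γ) (Icc 0 2) := by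
  rcases le_or_gt Γ 0 with hΓ0 | hΓ0
  · -- `log (e / s) ^ Γ = (log (e / s)⁻¹) ^ (-Γ)` with `-Γ ≥ 0`
    refine ((quasiIncreasingOn_rpow_const hγ).mono Icc_subset_Ici_self |>.mul
      (quasiIncreasingOn_inv_log_exp_one_div.rpow (fun s hs => ?_) (neg_nonneg.2 hΓ0))
      (fun s hs => Real.rpow_nonneg hs.1 γ) (fun s hs => ?_)).congr fun s hs => ?_
    · exact inv_nonneg.2 (log_exp_one_div_nonneg hs)
    · exact Real.rpow_nonneg (inv_nonneg.2 (log_exp_one_div_nonneg hs)) _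
    · rw [Real.inv_rpow (log_exp_one_div_nonneg hs), ← Real.rpow_neg (log_exp_one_div_nonneg hs),
        neg_neg]
  · -- `s ^ γ * log (e / s) ^ Γ = (s ^ (γ / Γ) * log (e / s)) ^ Γ` with `γ / Γ > 0`
    have hγ0 : 0 < γ := hγ.lt_of_ne fun h => (hΓ h.symm).not_gt hΓ0
    refine ((quasiIncreasingOn_rpow_mul_log_exp_one_div (div_pos hγ0 hΓ0)).rpow
      (fun s hs => mul_nonneg (Real.rpow_nonneg hs.1 _) (log_exp_one_div_nonneg hs))
      hΓ0.le).congr fun s hs => ?_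
    rw [Real.mul_rpow (Real.rpow_nonneg hs.1 _) (log_exp_one_div_nonneg hs),
      ← Real.rpow_mul hs.1, div_mul_cancel₀ γ hΓ0.ne']

lemma exists_prod_le_mul_prod_of_quasiIncreasingOn {ι : Type*} [Fintype ι] {f : ι → ℝ → ℝ}
    {S : Set ℝ} (hf : ∀ i, QuasiIncreasingOn (f i) S) (hf0 : ∀ i, ∀ s ∈ S, 0 ≤ f i s)
    {A : ℝ} (hA : 1 ≤ A) :
    ∃ K, 0 < K ∧ ∀ s t : ι → ℝ, (∀ i, s i ∈ S) → (∀ i, t i ∈ S) → (∀ i, s i ≤ A * t i) →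
      ∏ i, f i (s i) ≤ K * ∏ i, f i (t i) := by
  choose C hC hfC using fun i => hf i A hA
  refine ⟨∏ i, C i, Finset.prod_pos fun i _ => hC i, fun s t hs ht hst => ?_⟩
  rw [← Finset.prod_mul_distrib]
  exact Finset.prod_le_prod (fun i _ => hf0 i _ (hs i)) fun i _ => hfC i _ (hs i) _ (ht i) (hst i)

namespace AStarWith

variable {w : ℝ → ℝ} {L a b : ℝ}

lemma integrableOn_Icc (hw : AStarWith w L) (ha : -1 ≤ a) (hb : b ≤ 1) :
    IntegrableOn w (Icc a b) :=
  hw.2.2.1.mono_set (Icc_subset_Icc ha hb)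

lemma le_setIntegral (hw : AStarWith w L) (ha : -1 ≤ a) (hab : a < b) (hb : b ≤ 1) {x : ℝ}
    (hx : x ∈ Icc a b) : w x ≤ L / (b - a) * ∫ u in Icc a b, w u := by
  rw [integral_Icc_eq_integral_Ioc, ← intervalIntegral.integral_of_le hab.le]
  exact hw.2.2.2 a b ha hab hb x hx

lemma setIntegral_le (hw : AStarWith w L) (ha : -1 ≤ a) (hab : a < b) (hb : b ≤ 1)
    {B : Set ℝ} (hB : MeasurableSet B) (hBab : B ⊆ Icc a b) :
    ∫ u in B, w u ≤ L / (b - a) * (∫ u in Icc a b, w u) * volume.real B := by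
  have hfin : volume B ≠ ⊤ := ((measure_mono hBab).trans_lt measure_Icc_lt_top).ne
  calc ∫ u in B, w u ≤ ∫ _ in B, L / (b - a) * ∫ u in Icc a b, w u :=
        setIntegral_mono_on ((hw.integrableOn_Icc ha hb).mono_set hBab) (integrableOn_const hfin)
          hB fun u hu => hw.le_setIntegral ha hab hb (hBab hu)
    _ = _ := by rw [setIntegral_const, smul_eq_mul, mul_comm]

lemma integral_le_two_mul_setIntegral_sdiff {ι : Type*} [Fintype ι] (hw : AStarWith w L)
    (ha : -1 ≤ a) (hab : a < b) (hb : b ≤ 1) (z : ι → ℝ) {δ : ℝ} (hδ : 0 ≤ δ)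
    (hδL : 4 * Fintype.card ι * L * δ ≤ b - a) :
    ∫ u in Icc a b, w u ≤ 2 * ∫ u in Icc a b \ ⋃ i, Ioo (z i - δ) (z i + δ), w u := by
  set U := ⋃ i, Ioo (z i - δ) (z i + δ)
  set I := ∫ u in Icc a b, w u
  have hU : MeasurableSet U := MeasurableSet.iUnion fun i => measurableSet_Ioo
  have hI : 0 ≤ I := setIntegral_nonneg measurableSet_Icc fun u _ => hw.2.1 u
  have hvol : volume.real (Icc a b ∩ U) ≤ Fintype.card ι * (2 * δ) := by
    rw [inter_iUnion]
    refine (measureReal_iUnion_fintype_le _).trans ?_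
    calc ∑ i, volume.real (Icc a b ∩ Ioo (z i - δ) (z i + δ)) ≤ ∑ _ : ι, 2 * δ :=
          Finset.sum_le_sum fun i _ =>
            (measureReal_mono inter_subset_right measure_Ioo_lt_top.ne).trans
            (by rw [Real.volume_real_Ioo_of_le (by linarith)]; linarith)
      _ = _ := by simp
  have hbad : ∫ u in Icc a b ∩ U, w u ≤ I / 2 := calc
    _ ≤ L / (b - a) * I * volume.real (Icc a b ∩ U) :=
      hw.setIntegral_le ha hab hb (measurableSet_Icc.inter hU) inter_subset_left
    _ ≤ L / (b - a) * I * (Fintype.card ι * (2 * δ)) := by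
      have := hw.1; gcongr
    _ = 4 * Fintype.card ι * L * δ / (b - a) * I / 2 := by ring
    _ ≤ 1 * I / 2 := by gcongr; rwa [div_le_one (sub_pos.2 hab)]
    _ = I / 2 := by rw [one_mul]
  linarith [integral_inter_add_sdiff hU (hw.integrableOn_Icc ha hb)]

lemma mul_le_setIntegral_mul (hw : AStarWith w L) (ha : -1 ≤ a) (hab : a < b) (hb : b ≤ 1)
    {v : ℝ → ℝ} (hv0 : ∀ u ∈ Icc a b, 0 ≤ v u)
    (hwv : IntegrableOn (fun u => w u * v u) (Icc a b)) {G : Set ℝ} (hG : MeasurableSet G)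
    (hGab : G ⊆ Icc a b) (hmass : ∫ u in Icc a b, w u ≤ 2 * ∫ u in G, w u) {K : ℝ} (hK : 0 ≤ K)
    {x : ℝ} (hx : x ∈ Icc a b) (hvx : ∀ u ∈ G, v x ≤ K * v u) :
    w x * v x ≤ 2 * L * K / (b - a) * ∫ u in Icc a b, w u * v u := by
  have hL := hw.1
  have hba : 0 < b - a := sub_pos.2 hab
  have hG_le : ∫ u in G, w u * v x ≤ ∫ u in G, K * (w u * v u) := by
    refine setIntegral_mono_on (((hw.integrableOn_Icc ha hb).mono_set hGab).mul_const _)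
      ((hwv.mono_set hGab).const_mul K) hG fun u hu => ?_
    calc w u * v x ≤ w u * (K * v u) := mul_le_mul_of_nonneg_left (hvx u hu) (hw.2.1 u)
      _ = K * (w u * v u) := by ring
  calc w x * v x ≤ L / (b - a) * (∫ u in Icc a b, w u) * v x :=
        mul_le_mul_of_nonneg_right (hw.le_setIntegral ha hab hb hx) (hv0 x hx)
    _ ≤ L / (b - a) * (2 * ∫ u in G, w u) * v x := by gcongr; exact hv0 x hx
    _ = 2 * L / (b - a) * ∫ u in G, w u * v x := by rw [integral_mul_const]; ring
    _ ≤ 2 * L / (b - a) * ∫ u in G, K * (w u * v u) := by gcongr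
    _ = 2 * L * K / (b - a) * ∫ u in G, w u * v u := by rw [integral_const_mul]; ring
    _ ≤ 2 * L * K / (b - a) * ∫ u in Icc a b, w u * v u := by
        refine mul_le_mul_of_nonneg_left (setIntegral_mono_set hwv
          (ae_restrict_of_forall_mem measurableSet_Icc fun u hu => mul_nonneg (hw.2.1 u) (hv0 u hu))
          hGab.eventuallyLE) (by positivity)

end AStarWith

lemma abs_sub_mem_Icc_zero_two {x y : ℝ} (hx : x ∈ Icc (-1 : ℝ) 1) (hy : y ∈ Icc (-1 : ℝ) 1) :
    |x - y| ∈ Icc (0 : ℝ) 2 :=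
  ⟨abs_nonneg _, abs_le.2 ⟨by linarith [hx.1, hy.2], by linarith [hx.2, hy.1]⟩⟩

lemma abs_sub_le_add_one_mul_abs_sub {a b x u z D δ : ℝ} (hx : x ∈ Icc a b) (hu : u ∈ Icc a b)
    (hD : 0 ≤ D) (hab : b - a ≤ D * δ) (hδu : δ ≤ |u - z|) : |x - z| ≤ (D + 1) * |u - z| := by
  have hxu : |x - u| ≤ b - a :=
    abs_sub_le_iff.2 ⟨by linarith [hx.2, hu.1], by linarith [hx.1, hu.2]⟩
  calc |x - z| ≤ |x - u| + |u - z| := abs_sub_le x u z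
    _ ≤ D * |u - z| + |u - z| := by nlinarith
    _ = (D + 1) * |u - z| := by ring

theorem exists_AStarWith_mul_prod {ι : Type*} [Fintype ι] {f : ι → ℝ → ℝ}
    (hf : ∀ i, QuasiIncreasingOn (f i) (Icc 0 2)) (hf0 : ∀ i, ∀ s ∈ Icc (0 : ℝ) 2, 0 ≤ f i s)
    (hfm : ∀ i, Measurable (f i)) {L : ℝ} (hL : 0 < L) :
    ∃ L', 0 < L' ∧ ∀ (w : ℝ → ℝ) (z : ι → ℝ), AStarWith w L → ZeroOutside w →
      (∀ i, z i ∈ Icc (-1 : ℝ) 1) → AStarWith (fun x => w x * ∏ i, f i |x - z i|) L' := by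
  set D : ℝ := 4 * (Fintype.card ι + 1) * L
  obtain ⟨K, hK, hKcmp⟩ := exists_prod_le_mul_prod_of_quasiIncreasingOn hf hf0
    (le_add_of_nonneg_left (by positivity : 0 ≤ D))
  obtain ⟨K₁, -, hK₁⟩ := exists_prod_le_mul_prod_of_quasiIncreasingOn hf hf0 le_rfl
  refine ⟨2 * L * K, by positivity, fun w z hw hw0 hz => ?_⟩
  set v : ℝ → ℝ := fun x => ∏ i, f i |x - z i|
  have hv0 : ∀ x ∈ Icc (-1 : ℝ) 1, 0 ≤ v x := fun x hx =>
    Finset.prod_nonneg fun i _ => hf0 i _ (abs_sub_mem_Icc_zero_two hx (hz i))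
  have hwv : IntegrableOn (fun x => w x * v x) (Icc (-1 : ℝ) 1) := by
    refine hw.2.2.1.mul_bdd (by fun_prop) (c := K₁ * ∏ i, f i 2)
      (ae_restrict_of_forall_mem measurableSet_Icc fun x hx => ?_)
    rw [Real.norm_of_nonneg (hv0 x hx)]
    simpa using hK₁ _ (fun _ => 2) (fun i => abs_sub_mem_Icc_zero_two hx (hz i))
      (fun _ => ⟨zero_le_two, le_rfl⟩)
      fun i => (one_mul (2 : ℝ)).symm ▸ (abs_sub_mem_Icc_zero_two hx (hz i)).2
  refine ⟨by positivity, fun x => ?_, hwv, fun a b ha hab hb x hx => ?_⟩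
  · by_cases hx : x ∈ Icc (-1 : ℝ) 1
    · exact mul_nonneg (hw.2.1 x) (hv0 x hx)
    · simp [hw0 x hx]
  set δ := (b - a) / D
  have hD : 0 < D := by positivity
  have hδ : 0 < δ := div_pos (sub_pos.2 hab) hD
  have hδD : b - a = D * δ := (mul_div_cancel₀ _ hD.ne').symm
  have hIcc : Icc a b ⊆ Icc (-1) 1 := Icc_subset_Icc ha hb
  have hmass := hw.integral_le_two_mul_setIntegral_sdiff ha hab hb z hδ.le (by
    rw [hδD]; gcongr; simp [D]; nlinarith)
  have hcmp : ∀ u ∈ Icc a b \ ⋃ i, Ioo (z i - δ) (z i + δ), v x ≤ K * v u := by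
    rintro u ⟨hu, hfar⟩
    refine hKcmp _ _ (fun i => abs_sub_mem_Icc_zero_two (hIcc hx) (hz i))
      (fun i => abs_sub_mem_Icc_zero_two (hIcc hu) (hz i)) fun i => ?_
    refine abs_sub_le_add_one_mul_abs_sub hx hu hD.le hδD.le ?_
    by_contra! h
    exact hfar (mem_iUnion.2 ⟨i, by rw [abs_lt] at h; constructor <;> linarith⟩)
  have key := hw.mul_le_setIntegral_mul ha hab hb (fun u hu => hv0 u (hIcc hu))
    (hwv.mono_set hIcc) (measurableSet_Icc.diff (MeasurableSet.iUnion fun i => measurableSet_Ioo))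
    sdiff_subset hmass hK.le hx hcmp
  rwa [integral_Icc_eq_integral_Ioc, ← intervalIntegral.integral_of_le hab.le] at key

theorem stmt_1_general (M : ℕ) (γ Γ : Fin M → ℝ) (Lstar : ℝ) (hLstar : 0 < Lstar)
    (hγ : ∀ i, 0 ≤ γ i) (hΓ : ∀ i, γ i = 0 → Γ i ≤ 0) :
    ∃ L : ℝ, 0 < L ∧ ∀ (w : ℝ → ℝ) (z : Fin M → ℝ),
      AStarWith w Lstar → ZeroOutside w → (∀ i, z i ∈ Icc (-1 : ℝ) 1) →
      AStarWith (fun x => w x *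
        ∏ i : Fin M,
          (|x - z i| ^ (γ i) * (Real.log (Real.exp 1 / |x - z i|)) ^ (Γ i))) L :=
  exists_AStarWith_mul_prod
    (fun i => quasiIncreasingOn_rpow_mul_log_exp_one_div_rpow (hγ i) (hΓ i))
    (fun i s hs => mul_nonneg (Real.rpow_nonneg hs.1 _)
      (Real.rpow_nonneg (log_exp_one_div_nonneg hs) _))
    (fun i => by fun_prop) hLstar

/-- generalized Ditzian–Totik type factors preserve the A* property. -/
theorem stmt_1 (M : ℕ) (hM : 0 < M) (γ Γ : Fin M → ℝ) (Lstar : ℝ) (hLstar : 0 < Lstar)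
    (hγ : ∀ i, 0 ≤ γ i) (hΓ : ∀ i, γ i = 0 → Γ i ≤ 0) :
    ∃ L : ℝ, 0 < L ∧ ∀ (w : ℝ → ℝ) (z : Fin M → ℝ),
      AStarWith w Lstar → ZeroOutside w → (∀ i, z i ∈ Icc (-1 : ℝ) 1) →
      AStarWith (fun x => w x *
        ∏ i : Fin M,
          (|x - z i| ^ (γ i) * (Real.log (Real.exp 1 / |x - z i|)) ^ (Γ i))) L :=
  stmt_1_general M γ Γ Lstar hLstar hγ hΓ
end
end

section
/- Let w be an A* weight on [-1,1] and Z ∈ 𝔷_M. Then the following conditions are equivalent: (i) w ∈ W*(Z); (ii) there exists c* > 0 depending only on w such that, for every n ∈ ℕ and all x, y with [x,y] ⊆ I_{1,1/n} and |x-y| ≤ ρ_n(x), one has c* w(y) ≤ w(x) ≤ c*^{-1} w(y); (iii) there exist N ∈ ℕ and c* > 0 depending only on w such that the inequalities in (ii) hold for every n ≥ N and all such x, y; (iv) for every A, B > 0 there exists c* > 0 depending only on w, A, B such that, for every n ∈ ℕ and all x, y with [x,y] ⊆ I_{A,1/n} and |x-y| ≤ B ρ_n(x), one has c* w(y) ≤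 w(x) ≤ c*^{-1} w(y); (v) for every A > 0 there exist constants c₁, c₂ > 0 depending only on w and A such that c₁ w_n(x) ≤ w(x) ≤ c₂ w_n(x) for every n ∈ ℕ and every x ∈ I_{A,1/n}. -/
open MeasureTheory Set
open scoped BigOperators

noncomputable section

/-!
The implications (i) ⇒ (ii) ⇒ (iii) are specialisations. For (iii) ⇒ (iv), pass from the scale
`n` to `n s` with `s` large: the excluded neighbourhoods `ρ(1/(ns), z_j)` shrink below
`A ρ(1/n, z_j)`, while `ρ_n ≤ s² ρ_{ns}` and `ρ_n(x) ≍ ρ_n(u)` for `u ∈ [x, y]`, so `[x, y]` splits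
into boundedly many steps to which (iii) applies. For (iv) ⇒ (v), the upper bound `w ≤ L w_n` is
the A* condition on `[x - ρ_n(x), x + ρ_n(x)] ∩ [-1, 1]`; for the lower bound, (iv) bounds `w` by
`c⁻¹ w(x)` on a neighbourhood of `x` of radius comparable to `ρ_n(x)` (it stays inside
`I_{A/2,1/n}`), and A* weights are doubling. For (v) ⇒ (i), given `ε` take `n ≈ 1/ε`: then
`ρ_n(x) ≍ ρ_n(y)`, so by doubling `w_n(x) ≍ w_n(y)`.
-/

lemma phi_nonneg (x : ℝ) : 0 ≤ phi x := Real.sqrt_nonneg _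

lemma phi_sq_sub_phi_sq_le {x : ℝ} (hx : x ∈ Icc (-1 : ℝ) 1) (v : ℝ) :
    phi x ^ 2 - phi v ^ 2 ≤ 2 * |x - v| := by
  obtain ⟨hx₁, hx₂⟩ := hx
  have hφx : phi x ^ 2 = 1 - x ^ 2 := Real.sq_sqrt (by nlinarith)
  by_cases hv : v ∈ Icc (-1 : ℝ) 1
  · have hφv : phi v ^ 2 = 1 - v ^ 2 := Real.sq_sqrt (by nlinarith [hv.1, hv.2])
    rw [hφx, hφv]
    cases abs_cases (x - v) <;> nlinarith [hv.1, hv.2]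
  · have hφv : phi v = 0 := Real.sqrt_eq_zero_of_nonpos (by
      simp only [mem_Icc, not_and_or, not_le] at hv; rcases hv with hv | hv <;> nlinarith)
    rw [hφx, hφv]
    simp only [mem_Icc, not_and_or, not_le] at hv
    rcases hv with hv | hv <;> cases abs_cases (x - v) <;> nlinarith

lemma rho_nonneg {h : ℝ} (hh : 0 ≤ h) (x : ℝ) : 0 ≤ rho h x := by
  have := phi_nonneg x
  unfold rho; positivity

lemma rho_le_rho {h h' : ℝ} (hh : 0 ≤ h) (hh' : h ≤ h') (x : ℝ) : rho h x ≤ rho h' x := by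
  have := phi_nonneg x
  unfold rho; gcongr

lemma rho_one_div (n : ℕ) (x : ℝ) : rho (1 / n) x = rhoN n x := by
  unfold rho rhoN; ring

lemma rhoN_pos {n : ℕ} (hn : 1 ≤ n) (x : ℝ) : 0 < rhoN n x := by
  have : (0 : ℝ) < n := by exact_mod_cast hn
  have := phi_nonneg x
  unfold rhoN; positivity

lemma rhoN_le_two {n : ℕ} (hn : 1 ≤ n) (x : ℝ) : rhoN n x ≤ 2 := by
  have hn : (1 : ℝ) ≤ n := by exact_mod_cast hn
  have hφ : phi x ≤ 1 := Real.sqrt_le_one.mpr (by nlinarith)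
  have h₁ : phi x / n ≤ 1 := div_le_one_of_le₀ (hφ.trans hn) (by positivity)
  have h₂ : 1 / (n : ℝ) ^ 2 ≤ 1 := div_le_one_of_le₀ (one_le_pow₀ hn) (by positivity)
  unfold rhoN; linarith

lemma sq_mul_rho_le {r h : ℝ} (hr₀ : 0 ≤ r) (hr₁ : r ≤ 1) (hh : 0 ≤ h) (x : ℝ) :
    r ^ 2 * rho h x ≤ rho (r * h) x := by
  have := phi_nonneg x
  unfold rho; nlinarith [mul_nonneg (mul_nonneg (mul_nonneg hr₀ (sub_nonneg.2 hr₁)) hh) this]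

lemma rho_le_mul_rho {B h x v : ℝ} (hB : 0 ≤ B) (hh : 0 ≤ h) (hx : x ∈ Icc (-1 : ℝ) 1)
    (hxv : |x - v| ≤ B * rho h x) : rho h x ≤ (2 * B + 4) * rho h v := by
  have ha := phi_nonneg x
  have hb := phi_nonneg v
  have hsq := phi_sq_sub_phi_sq_le hx v
  unfold rho at *
  set a := phi x
  set b := phi v
  rcases le_total a b with hab | hab
  · nlinarith [mul_le_mul_of_nonneg_left hab hh, mul_nonneg hB (mul_nonneg hh hb),
      mul_nonneg hB (sq_nonneg h)]
  · have hdiff : (a - b) ^ 2 ≤ 2 * B * (h * a + h ^ 2) := by nlinarith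
    nlinarith [sq_nonneg ((2 * B + 2) * h - (a - b)), mul_nonneg hB (mul_nonneg hh hb),
      mul_nonneg hB (sq_nonneg h), mul_nonneg hh hb, mul_nonneg hh (sub_nonneg.2 hab)]

lemma rho_le_mul_abs_sub {A h x z : ℝ} (hA : 0 < A) (hh : 0 ≤ h) (hx : x ∈ Icc (-1 : ℝ) 1)
    (hz : A * rho h z ≤ |x - z|) : rho h x ≤ (2 / A + 1) * |x - z| := by
  have ha := phi_nonneg x
  have he := phi_nonneg z
  have hsq := phi_sq_sub_phi_sq_le hx z
  unfold rho at *
  set a := phi x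
  set e := phi z
  set d := |x - z|
  have hd : 0 ≤ d := abs_nonneg _
  have hρz : h * e + h ^ 2 ≤ d / A := by rw [le_div_iff₀ hA]; linarith
  suffices h * (a - e) ≤ d / 2 + d / A by
    have : 2 / A * d = d / A + d / A := by ring
    nlinarith
  rcases le_total a e with hae | hae
  · nlinarith [mul_le_mul_of_nonneg_left hae hh, div_nonneg hd hA.le]
  · have hdiff : (a - e) ^ 2 ≤ 2 * d := by nlinarith
    have hAh : A * h ^ 2 ≤ d := by nlinarith [mul_nonneg hh he]
    rw [div_add_div _ _ two_ne_zero hA.ne', le_div_iff₀ (by positivity)]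
    nlinarith [sq_nonneg (A * h - (a - e))]

lemma rhoN_le_mul_rhoN {B x v : ℝ} {n : ℕ} (hB : 0 ≤ B) (hx : x ∈ Icc (-1 : ℝ) 1)
    (hxv : |x - v| ≤ B * rhoN n x) : rhoN n x ≤ (2 * B + 4) * rhoN n v := by
  simpa only [rho_one_div] using
    rho_le_mul_rho (h := 1 / n) hB (by positivity) hx (by rwa [rho_one_div])

lemma mul_rhoN_mul_le (n : ℕ) {s : ℕ} (hs : 1 ≤ s) (x : ℝ) : s * rhoN (n * s) x ≤ rhoN n x := by
  have hs' : (1 : ℝ) ≤ s := by exact_mod_cast hs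
  have := phi_nonneg x
  unfold rhoN
  push_cast
  rw [show (s : ℝ) * (phi x / (n * s) + 1 / (n * s) ^ 2) = phi x / n + 1 / n ^ 2 / s by
    field_simp]
  linarith [div_le_self (by positivity : (0 : ℝ) ≤ 1 / n ^ 2) hs']

lemma rhoN_le_sq_mul_rhoN_mul (n : ℕ) {s : ℕ} (hs : 1 ≤ s) (x : ℝ) :
    rhoN n x ≤ s ^ 2 * rhoN (n * s) x := by
  have hs' : (1 : ℝ) ≤ s := by exact_mod_cast hs
  have := phi_nonneg x
  unfold rhoN
  push_cast
  rw [show (s : ℝ) ^ 2 * (phi x / (n * s) + 1 / (n * s) ^ 2) = s * (phi x / n) + 1 / n ^ 2 by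
    field_simp]
  gcongr
  exact le_mul_of_one_le_left (by positivity) hs'

lemma exists_nat_min_rho_le {ε : ℝ} (hε : 0 < ε) :
    ∃ n : ℕ, 1 ≤ n ∧ 1 / (n : ℝ) ≤ ε ∧ ∀ x, min (rho ε x) 2 ≤ 4 * rhoN n x := by
  rcases le_or_gt ε 1 with hε1 | hε1
  · set n := ⌈1 / ε⌉₊
    have hn : 1 / ε ≤ n := Nat.le_ceil _
    have hn' : (n : ℝ) < 1 / ε + 1 := Nat.ceil_lt_add_one (by positivity)
    have hnpos : (0 : ℝ) < n := lt_of_lt_of_le (by positivity) hn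
    refine ⟨n, by exact_mod_cast hnpos, by rwa [div_le_iff₀ hnpos, ← div_le_iff₀' hε], fun x => ?_⟩
    -- `ε ≤ 2/n`, so `ρ(1/n, x) ≥ ρ(ε, x)/4`.
    have hr : 1 / (n * ε) ≤ 1 := by
      rw [div_le_one (by positivity), ← div_le_iff₀ hε]; exact hn
    have hr' : 1 / 2 ≤ 1 / (n * ε) := by
      rw [div_le_div_iff₀ two_pos (by positivity)]
      have : (n : ℝ) * ε < (1 / ε + 1) * ε := mul_lt_mul_of_pos_right hn' hε
      rw [add_mul, one_div_mul_cancel hε.ne'] at this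
      linarith
    have := sq_mul_rho_le (h := ε) (by positivity) hr hε.le x
    rw [show 1 / (n * ε) * ε = 1 / n by field_simp, rho_one_div] at this
    have hρ := rho_nonneg hε.le x
    refine (min_le_left _ _).trans ?_
    nlinarith [mul_le_mul_of_nonneg_right (pow_le_pow_left₀ (by norm_num) hr' 2) hρ]
  · refine ⟨1, le_rfl, by simpa using hε1.le, fun x => (min_le_right _ _).trans ?_⟩
    have := phi_nonneg x
    simp only [rhoN, Nat.cast_one, div_one, one_pow]
    linarith

lemma min_sub_max_mul_le {x t q : ℝ} (hx : x ∈ Icc (-1 : ℝ) 1) (ht : 0 ≤ t) (hq : 1 ≤ q) :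
    min (x + q * t) 1 - max (x - q * t) (-1) ≤ q * (min (x + t) 1 - max (x - t) (-1)) := by
  obtain ⟨hx₁, hx₂⟩ := hx
  have hright : min (x + q * t) 1 - x ≤ q * (min (x + t) 1 - x) := by
    simp only [min_def]; split_ifs <;> nlinarith
  have hleft : x - max (x - q * t) (-1) ≤ q * (x - max (x - t) (-1)) := by
    simp only [max_def]; split_ifs <;> nlinarith
  linarith

lemma Iah_subset_Iah {M : ℕ} {z : Fin M → ℝ} {A A' h h' : ℝ}
    (hle : ∀ j, A' * rho h' (z j) ≤ A * rho h (z j)) : Iah M z A h ⊆ Iah M z A' h' :=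
  fun _ hx => ⟨hx.1, fun j => (hle j).trans (hx.2 j)⟩

lemma exists_nat_uIcc_subset_Iah {M : ℕ} {z : Fin M → ℝ} {ε x y : ℝ} (hε : 0 < ε)
    (hx : x ∈ Icc (-1 : ℝ) 1) (hy : y ∈ Icc (-1 : ℝ) 1) (hxy : |x - y| ≤ rho ε x)
    (hdist : ∀ j : Fin M, ∀ u ∈ uIcc x y, rho ε (z j) ≤ |u - z j|) :
    ∃ n : ℕ, 1 ≤ n ∧ uIcc x y ⊆ Iah M z 1 (1 / n) ∧ |x - y| ≤ 4 * rhoN n x := by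
  obtain ⟨n, hn, hnε, hρ⟩ := exists_nat_min_rho_le hε
  refine ⟨n, hn, fun u hu => ⟨uIcc_subset_Icc hx hy hu, fun j => ?_⟩, ?_⟩
  · rw [one_mul]; exact (rho_le_rho (by positivity) hnε _).trans (hdist j u hu)
  · exact (le_min hxy (abs_sub_le_iff.2 ⟨by linarith [hx.2, hy.1], by linarith [hx.1, hy.2]⟩)).trans
      (hρ x)

lemma uIcc_subset_Iah_half {M : ℕ} {z : Fin M → ℝ} {A h x v : ℝ} (hA : 0 < A) (hh : 0 ≤ h)
    (hx : x ∈ Iah M z A h) (hv : v ∈ Icc (-1 : ℝ) 1)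
    (hxv : |x - v| ≤ rho h x / (2 * (2 / A + 1))) : uIcc x v ⊆ Iah M z (A / 2) h := by
  intro p hp
  refine ⟨uIcc_subset_Icc hx.1 hv hp, fun j => ?_⟩
  have hρ := rho_le_mul_abs_sub hA hh hx.1 (hx.2 j)
  have hxp : |x - p| ≤ |x - z j| / 2 := by
    rw [le_div_iff₀ (by positivity)] at hxv
    rw [abs_sub_comm]
    refine (abs_sub_left_of_mem_uIcc hp).trans ?_
    rw [abs_sub_comm]
    refine le_of_mul_le_mul_right (hxv.trans (hρ.trans_eq ?_)) (by positivity : 0 < 2 * (2 / A + 1))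
    ring
  have := abs_sub_le x p (z j)
  linarith [hx.2 j]

lemma EquivBy.trans {c c' d d' a b e : ℝ} (h₁ : EquivBy c c' a b) (h₂ : EquivBy d d' b e)
    (hd : 0 ≤ d) (hd' : 0 ≤ d') : EquivBy (d * c) (d' * c') a e :=
  ⟨by rw [mul_assoc]; exact (mul_le_mul_of_nonneg_left h₁.1 hd).trans h₂.1,
   by rw [mul_assoc]; exact h₂.2.trans (mul_le_mul_of_nonneg_left h₁.2 hd')⟩

lemma EquivBy.mul_le_mul {c₁ c₂ K a b p q : ℝ} (hc₁ : 0 ≤ c₁) (hc₂ : 0 ≤ c₂) (hK : 0 ≤ K)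
    (hp : EquivBy c₁ c₂ a p) (hq : EquivBy c₁ c₂ b q) (hba : b ≤ K * a) :
    c₁ * q ≤ c₂ * K * p :=
  calc c₁ * q ≤ c₁ * (c₂ * (K * a)) :=
        mul_le_mul_of_nonneg_left (hq.2.trans (mul_le_mul_of_nonneg_left hba hc₂)) hc₁
    _ = c₂ * K * (c₁ * a) := by ring
    _ ≤ c₂ * K * p := mul_le_mul_of_nonneg_left hp.1 (by positivity)

lemma EquivBy.pow_of_steps {f : ℝ → ℝ} {c x y : ℝ} (hc : 0 ≤ c) {K : ℕ} (hK : 0 < K)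
    (hstep : ∀ p ∈ uIcc x y, ∀ q ∈ uIcc x y, |p - q| ≤ |x - y| / K → EquivBy c c⁻¹ (f q) (f p)) :
    EquivBy (c ^ K) (c ^ K)⁻¹ (f y) (f x) := by
  have hK' : (0 : ℝ) < K := by exact_mod_cast hK
  set u : ℕ → ℝ := fun i => AffineMap.lineMap x y ((i : ℝ) / K)
  have hu : ∀ i ≤ K, u i ∈ uIcc x y := fun i hi => by
    rw [← segment_eq_uIcc]
    refine lineMap_mem_segment ℝ x y ⟨by positivity, ?_⟩
    rw [div_le_one hK']; exact_mod_cast hi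
  have hdist (i : ℕ) : |u i - u (i + 1)| = |x - y| / K := by
    have := dist_lineMap_lineMap x y ((i : ℝ) / K) (((i + 1 : ℕ) : ℝ) / K)
    have hgap : (i : ℝ) / K - ((i + 1 : ℕ) : ℝ) / K = -(1 / K) := by push_cast; ring
    simp only [Real.dist_eq, hgap, abs_neg, abs_of_pos (one_div_pos.2 hK')] at this
    rw [this, abs_sub_comm x y, one_div_mul_eq_div]
  have hchain : ∀ i ≤ K, EquivBy (c ^ i) (c⁻¹ ^ i) (f (u i)) (f x) := by
    intro i hi
    induction i with
    | zero => simp [u, EquivBy]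
    | succ i ih =>
      rw [pow_succ, pow_succ]
      exact (hstep _ (hu i (by omega)) _ (hu (i + 1) hi) (hdist i).le).trans (ih (by omega))
        (by positivity) (by positivity)
  have hK1 : u K = y := by simp [u, div_self hK'.ne']
  simpa [hK1, inv_pow] using hchain K le_rfl

lemma exists_comparable_of_eventually_comparable {M : ℕ} {z : Fin M → ℝ} {w : ℝ → ℝ} {N : ℕ}
    {c : ℝ} (hc : 0 < c) (H : ∀ n : ℕ, N ≤ n → ∀ x y : ℝ,
      uIcc x y ⊆ Iah M z 1 (1 / n) → |x - y| ≤ rhoN n x → c * w y ≤ w x ∧ w x ≤ c⁻¹ * w y)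
    {A B : ℝ} (hA : 0 < A) (hB : 0 ≤ B) :
    ∃ c' : ℝ, 0 < c' ∧ ∀ n : ℕ, 1 ≤ n → ∀ x y : ℝ,
      uIcc x y ⊆ Iah M z A (1 / n) → |x - y| ≤ B * rhoN n x →
      c' * w y ≤ w x ∧ w x ≤ c'⁻¹ * w y := by
  set s : ℕ := N + 1 + ⌈1 / A⌉₊
  have hs : 1 ≤ s := by omega
  have hsA : 1 / (s : ℝ) ≤ A := by
    rw [div_le_iff₀ (by positivity), ← div_le_iff₀' hA]
    exact (Nat.le_ceil _).trans (by norm_cast; omega)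
  set K : ℕ := ⌈B * (2 * B + 4) * (s : ℝ) ^ 2⌉₊ + 1
  have hK : B * (2 * B + 4) * (s : ℝ) ^ 2 ≤ K := by
    simp only [K]; push_cast; linarith [Nat.le_ceil (B * (2 * B + 4) * (s : ℝ) ^ 2)]
  refine ⟨c ^ K, by positivity, fun n hn x y hxy hdist => ?_⟩
  have hfine : Iah M z A (1 / n) ⊆ Iah M z 1 (1 / (n * s : ℕ)) := Iah_subset_Iah fun j => by
    rw [one_mul, rho_one_div, rho_one_div]
    calc rhoN (n * s) (z j) = 1 / s * (s * rhoN (n * s) (z j)) := by field_simp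
      _ ≤ A * rhoN n (z j) := mul_le_mul hsA (mul_rhoN_mul_le n hs (z j)) (by
          have := rhoN_pos (Nat.one_le_iff_ne_zero.2 (by positivity : n * s ≠ 0)) (z j)
          positivity) hA.le
  have hx : x ∈ Icc (-1 : ℝ) 1 := (hxy left_mem_uIcc).1
  have hstep : ∀ p ∈ uIcc x y, |x - y| / K ≤ rhoN (n * s) p := fun p hp => by
    have hρ := rhoN_le_mul_rhoN (v := p) hB hx (by
      rw [abs_sub_comm]
      exact (abs_sub_left_of_mem_uIcc hp).trans ((abs_sub_comm y x).le.trans hdist))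
    rw [div_le_iff₀ (by positivity)]
    calc |x - y| ≤ B * ((2 * B + 4) * (s ^ 2 * rhoN (n * s) p)) := by
          refine hdist.trans (mul_le_mul_of_nonneg_left (hρ.trans ?_) hB)
          exact mul_le_mul_of_nonneg_left (rhoN_le_sq_mul_rhoN_mul n hs p) (by positivity)
      _ = B * (2 * B + 4) * s ^ 2 * rhoN (n * s) p := by ring
      _ ≤ K * rhoN (n * s) p := by
          gcongr; exact (rhoN_pos (Nat.one_le_iff_ne_zero.2 (by positivity)) p).le
      _ = rhoN (n * s) p * K := mul_comm _ _
  exact EquivBy.pow_of_steps hc.le (by omega) fun p hp q hq hpq =>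
    H (n * s) (le_mul_of_one_le_of_le hn (by omega)) p q
      (fun v hv => hfine (hxy (uIcc_subset_uIcc hp hq hv))) (hpq.trans (hstep p hp))

def ballIntegral (w : ℝ → ℝ) (x t : ℝ) : ℝ := ∫ u in (x - t)..(x + t), w u

lemma wAvg_eq (w : ℝ → ℝ) (n : ℕ) (x : ℝ) :
    wAvg w n x = (rhoN n x)⁻¹ * ballIntegral w x (rhoN n x) := rfl

lemma ballIntegral_le_of_forall_le {w : ℝ → ℝ} {x t m : ℝ} (ht : 0 ≤ t) (hw : ∀ v, 0 ≤ w v)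
    (h : ∀ v ∈ Ioc (x - t) (x + t), w v ≤ m) : ballIntegral w x t ≤ 2 * t * m := by
  have hbound : ∀ v ∈ uIoc (x - t) (x + t), ‖w v‖ ≤ m := fun v hv => by
    rw [uIoc_of_le (by linarith)] at hv
    rw [Real.norm_of_nonneg (hw v)]; exact h v hv
  calc ballIntegral w x t ≤ ‖ballIntegral w x t‖ := Real.le_norm_self _
    _ ≤ m * |x + t - (x - t)| := intervalIntegral.norm_integral_le_of_norm_le_const hbound
    _ = 2 * t * m := by
      rw [show x + t - (x - t) = 2 * t by ring, abs_of_nonneg (by positivity)]; ring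

lemma intervalIntegral_eq_zero_of_forall_Ioo {f : ℝ → ℝ} {a b : ℝ} (hab : a ≤ b)
    (hf : ∀ u ∈ Ioo a b, f u = 0) : ∫ u in a..b, f u = 0 := by
  rw [intervalIntegral.integral_of_le hab, integral_Ioc_eq_integral_Ioo]
  exact setIntegral_eq_zero_of_forall_eq_zero hf

namespace AStarWith

variable {w : ℝ → ℝ} {L : ℝ}

lemma integrable (hL : AStarWith w L) (hw0 : ZeroOutside w) : Integrable w :=
  hL.2.2.1.integrable_of_forall_notMem_eq_zero hw0

lemma ballIntegral_eq_clamp (hL : AStarWith w L) (hw0 : ZeroOutside w) (x t : ℝ) :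
    ballIntegral w x t = ∫ u in (max (x - t) (-1))..(min (x + t) 1), w u := by
  have hi (a b : ℝ) : IntervalIntegrable w volume a b := (hL.integrable hw0).intervalIntegrable
  have hleft : ∫ u in (x - t)..(max (x - t) (-1)), w u = 0 :=
    intervalIntegral_eq_zero_of_forall_Ioo (le_max_left _ _) fun u hu => hw0 u fun hu' => by
      rcases lt_max_iff.1 hu.2 with h | h <;> linarith [hu.1, hu'.1]
  have hright : ∫ u in (min (x + t) 1)..(x + t), w u = 0 :=
    intervalIntegral_eq_zero_of_forall_Ioo (min_le_left _ _) fun u hu => hw0 u fun hu' => by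
      rcases min_lt_iff.1 hu.1 with h | h <;> linarith [hu.2, hu'.2]
  rw [ballIntegral, ← intervalIntegral.integral_add_adjacent_intervals
      (hi (x - t) (min (x + t) 1)) (hi _ (x + t)),
    ← intervalIntegral.integral_add_adjacent_intervals (hi (x - t) (max (x - t) (-1))) (hi _ _),
    hleft, hright, zero_add, add_zero]

lemma ballIntegral_mono (hL : AStarWith w L) (hw0 : ZeroOutside w) {x y s t : ℝ}
    (hs : 0 ≤ s) (hsub : x - t ≤ y - s ∧ y + s ≤ x + t) :
    ballIntegral w y s ≤ ballIntegral w x t :=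
  intervalIntegral.integral_mono_interval hsub.1 (by linarith) hsub.2
    (.of_forall fun u => hL.2.1 u) (hL.integrable hw0).intervalIntegrable

lemma ballIntegral_nonneg (hL : AStarWith w L) {x t : ℝ} (ht : 0 ≤ t) :
    0 ≤ ballIntegral w x t :=
  intervalIntegral.integral_nonneg (by linarith) fun u _ => hL.2.1 u

lemma integral_le_mul_integral (hL : AStarWith w L) {a b c d : ℝ} (ha : -1 ≤ a) (hab : a < b)
    (hb : b ≤ 1) (hc : a ≤ c) (hcd : c ≤ d) (hd : d ≤ b) :
    ∫ u in c..d, w u ≤ L * (d - c) / (b - a) * ∫ u in a..b, w u := by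
  have hbound : ∀ u ∈ uIoc c d, ‖w u‖ ≤ L / (b - a) * ∫ u in a..b, w u := fun u hu => by
    rw [uIoc_of_le hcd] at hu
    rw [Real.norm_of_nonneg (hL.2.1 u)]
    exact hL.2.2.2 a b ha hab hb u ⟨by linarith [hu.1], by linarith [hu.2]⟩
  calc ∫ u in c..d, w u ≤ ‖∫ u in c..d, w u‖ := Real.le_norm_self _
    _ ≤ L / (b - a) * (∫ u in a..b, w u) * |d - c| :=
      intervalIntegral.norm_integral_le_of_norm_le_const hbound
    _ = L * (d - c) / (b - a) * ∫ u in a..b, w u := by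
      rw [abs_of_nonneg (sub_nonneg.2 hcd)]; ring

/-- Outside a subinterval of relative measure at most `1/(2L)` an A* weight carries at most half
of its mass. -/
lemma integral_le_two_mul_integral (hL : AStarWith w L) (hw0 : ZeroOutside w) {a b c d : ℝ}
    (ha : -1 ≤ a) (hab : a < b) (hb : b ≤ 1) (hc : a ≤ c) (hcd : c ≤ d) (hd : d ≤ b)
    (hlen : 2 * L * ((b - a) - (d - c)) ≤ b - a) :
    ∫ u in a..b, w u ≤ 2 * ∫ u in c..d, w u := by
  have hi (a b : ℝ) : IntervalIntegrable w volume a b := (hL.integrable hw0).intervalIntegrable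
  have hI : 0 ≤ ∫ u in a..b, w u := intervalIntegral.integral_nonneg hab.le fun u _ => hL.2.1 u
  have hl := hL.integral_le_mul_integral ha hab hb le_rfl hc (hcd.trans hd)
  have hr := hL.integral_le_mul_integral ha hab hb (hc.trans hcd) hd le_rfl
  have hsplit : ∫ u in a..b, w u = (∫ u in a..c, w u) + (∫ u in c..d, w u) + ∫ u in d..b, w u := by
    rw [intervalIntegral.integral_add_adjacent_intervals (hi a c) (hi c d),
      intervalIntegral.integral_add_adjacent_intervals (hi a d) (hi d b)]
  have hfrac : L * (c - a) / (b - a) + L * (b - d) / (b - a) ≤ 1 / 2 := by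
    rw [← add_div, div_le_iff₀ (by linarith)]; linarith
  nlinarith [mul_le_mul_of_nonneg_right hfrac hI]

lemma ballIntegral_mul_le (hL : AStarWith w L) (hw0 : ZeroOutside w) {x t : ℝ}
    (hx : x ∈ Icc (-1 : ℝ) 1) (ht : 0 < t) :
    ballIntegral w x ((1 + 1 / (2 * L)) * t) ≤ 2 * ballIntegral w x t := by
  obtain ⟨hx₁, hx₂⟩ := hx
  have hL0 := hL.1
  set q := 1 + 1 / (2 * L) with hq_def
  have hq : 1 ≤ q := by simp only [hq_def, le_add_iff_nonneg_right]; positivity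
  have hqt : t ≤ q * t := le_mul_of_one_le_left ht.le hq
  rw [ballIntegral_eq_clamp hL hw0, ballIntegral_eq_clamp hL hw0]
  have hsub : max (x - q * t) (-1) ≤ max (x - t) (-1) := max_le_max (by linarith) le_rfl
  have hsub' : min (x + t) 1 ≤ min (x + q * t) 1 := min_le_min (by linarith) le_rfl
  have hlen := min_sub_max_mul_le ⟨hx₁, hx₂⟩ ht.le hq
  refine hL.integral_le_two_mul_integral hw0 (le_max_right _ _)
    (max_lt (lt_min (by linarith) (by linarith)) (lt_min (by linarith) (by norm_num)))
    (min_le_right _ _) hsub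
    (max_le (le_min (by linarith) (by linarith)) (le_min (by linarith) (by norm_num))) hsub' ?_
  calc 2 * L * ((min (x + q * t) 1 - max (x - q * t) (-1)) - (min (x + t) 1 - max (x - t) (-1)))
      ≤ 2 * L * ((q - 1) * (min (x + t) 1 - max (x - t) (-1))) := by gcongr; linarith
    _ = min (x + t) 1 - max (x - t) (-1) := by rw [hq_def]; field_simp; ring
    _ ≤ min (x + q * t) 1 - max (x - q * t) (-1) := by linarith

lemma ballIntegral_pow_mul_le (hL : AStarWith w L) (hw0 : ZeroOutside w) {x t : ℝ}
    (hx : x ∈ Icc (-1 : ℝ) 1) (ht : 0 < t) (k : ℕ) :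
    ballIntegral w x ((1 + 1 / (2 * L)) ^ k * t) ≤ 2 ^ k * ballIntegral w x t := by
  have hL0 := hL.1
  induction k with
  | zero => simp
  | succ k ih =>
    calc ballIntegral w x ((1 + 1 / (2 * L)) ^ (k + 1) * t)
        = ballIntegral w x ((1 + 1 / (2 * L)) * ((1 + 1 / (2 * L)) ^ k * t)) := by ring_nf
      _ ≤ 2 * ballIntegral w x ((1 + 1 / (2 * L)) ^ k * t) :=
        hL.ballIntegral_mul_le hw0 hx (by positivity)
      _ ≤ 2 ^ (k + 1) * ballIntegral w x t := by
        rw [pow_succ', mul_assoc]; exact mul_le_mul_of_nonneg_left ih (by norm_num)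

lemma exists_ballIntegral_mul_le (hL : AStarWith w L) (hw0 : ZeroOutside w) {C : ℝ}
    (hC : 0 ≤ C) : ∃ D : ℝ, 0 < D ∧ ∀ x ∈ Icc (-1 : ℝ) 1, ∀ t : ℝ, 0 < t →
      ballIntegral w x (C * t) ≤ D * ballIntegral w x t := by
  have hL0 := hL.1
  have hq : 1 < 1 + 1 / (2 * L) := by simp only [lt_add_iff_pos_right]; positivity
  obtain ⟨k, hk⟩ := pow_unbounded_of_one_lt C hq
  refine ⟨2 ^ k, by positivity, fun x hx t ht => ?_⟩
  have hCt : C * t ≤ (1 + 1 / (2 * L)) ^ k * t := by gcongr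
  exact (hL.ballIntegral_mono hw0 (by positivity) ⟨by linarith, by linarith⟩).trans
    (hL.ballIntegral_pow_mul_le hw0 hx ht k)

lemma le_mul_wAvg (hL : AStarWith w L) (hw0 : ZeroOutside w) {x : ℝ}
    (hx : x ∈ Icc (-1 : ℝ) 1) {n : ℕ} (hn : 1 ≤ n) : w x ≤ L * wAvg w n x := by
  obtain ⟨hx₁, hx₂⟩ := hx
  set ρ := rhoN n x
  have hρ : 0 < ρ := rhoN_pos hn x
  have hρ2 : ρ ≤ 2 := rhoN_le_two hn x
  have hlen : ρ ≤ min (x + ρ) 1 - max (x - ρ) (-1) := by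
    simp only [min_def, max_def]; split_ifs <;> linarith
  have hA := hL.2.2.2 (max (x - ρ) (-1)) (min (x + ρ) 1) (le_max_right _ _) (by linarith)
    (min_le_right _ _) x ⟨max_le (by linarith) hx₁, le_min (by linarith) hx₂⟩
  rw [← ballIntegral_eq_clamp hL hw0] at hA
  calc w x ≤ L / (min (x + ρ) 1 - max (x - ρ) (-1)) * ballIntegral w x ρ := hA
    _ ≤ L / ρ * ballIntegral w x ρ := by
      gcongr
      · exact hL.ballIntegral_nonneg hρ.le
      · exact hL.1.le
    _ = L * wAvg w n x := by rw [wAvg_eq]; ring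

lemma exists_equivBy_wAvg {M : ℕ} {z : Fin M → ℝ} (hL : AStarWith w L) (hw0 : ZeroOutside w)
    {A c : ℝ} (hA : 0 < A) (hc : 0 < c) (H : ∀ n : ℕ, 1 ≤ n → ∀ x y : ℝ,
      uIcc x y ⊆ Iah M z (A / 2) (1 / n) → |x - y| ≤ 1 * rhoN n x → c * w y ≤ w x) :
    ∃ c₁ c₂ : ℝ, 0 < c₁ ∧ 0 < c₂ ∧ ∀ n : ℕ, 1 ≤ n → ∀ x ∈ Iah M z A (1 / n),
      c₁ * wAvg w n x ≤ w x ∧ w x ≤ c₂ * wAvg w n x := by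
  set C := 2 * (2 / A + 1)
  have hC : 1 ≤ C := by simp only [C]; nlinarith [div_pos two_pos hA]
  obtain ⟨D, hD, hdoubling⟩ := hL.exists_ballIntegral_mul_le hw0 (by positivity : (0 : ℝ) ≤ C)
  refine ⟨c / (2 * D), L, by positivity, hL.1, fun n hn x hx => ⟨?_, hL.le_mul_wAvg hw0 hx.1 hn⟩⟩
  set ρ := rhoN n x
  have hρ : 0 < ρ := rhoN_pos hn x
  have hnear : ∀ v ∈ Ioc (x - ρ / C) (x + ρ / C), w v ≤ c⁻¹ * w x := by
    intro v hv
    by_cases hv' : v ∈ Icc (-1 : ℝ) 1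
    · have hxv : |x - v| ≤ ρ / C := abs_le.2 ⟨by linarith [hv.2], by linarith [hv.1]⟩
      have := H n hn x v (uIcc_subset_Iah_half hA (by positivity) hx hv'
        (by rwa [rho_one_div])) (hxv.trans (by rw [one_mul]; exact div_le_self hρ.le hC))
      rwa [le_inv_mul_iff₀ hc]
    · rw [hw0 v hv']; exact mul_nonneg (inv_nonneg.2 hc.le) (hL.2.1 x)
  have hsmall := ballIntegral_le_of_forall_le (by positivity) hL.2.1 hnear
  have hbig := hdoubling x hx.1 (ρ / C) (by positivity)
  rw [mul_div_cancel₀ _ (by positivity)] at hbig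
  rw [wAvg_eq, ← mul_le_mul_iff_of_pos_left (by positivity : 0 < 2 * D * ρ / c)]
  calc 2 * D * ρ / c * (c / (2 * D) * (ρ⁻¹ * ballIntegral w x ρ)) = ballIntegral w x ρ := by
        field_simp
    _ ≤ D * (2 * (ρ / C) * (c⁻¹ * w x)) := hbig.trans (mul_le_mul_of_nonneg_left hsmall hD.le)
    _ ≤ 2 * D * ρ / c * w x := by
        rw [show D * (2 * (ρ / C) * (c⁻¹ * w x)) = 2 * D * ρ / c * w x / C by field_simp]
        exact div_le_self (by have := hL.2.1 x; positivity) hC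

lemma exists_wAvg_le_mul_wAvg (hL : AStarWith w L) (hw0 : ZeroOutside w) {B : ℝ} (hB : 0 ≤ B) :
    ∃ K : ℝ, 0 < K ∧ ∀ n : ℕ, 1 ≤ n → ∀ x ∈ Icc (-1 : ℝ) 1, ∀ y ∈ Icc (-1 : ℝ) 1,
      |x - y| ≤ B * rhoN n x → wAvg w n y ≤ K * wAvg w n x := by
  obtain ⟨D, hD, hdoubling⟩ := hL.exists_ballIntegral_mul_le hw0
    (by positivity : (0 : ℝ) ≤ B + (2 * (B * (2 * B + 4)) + 4))
  refine ⟨(2 * B + 4) * D, by positivity, fun n hn x hx y hy hxy => ?_⟩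
  have hρx := rhoN_pos hn x
  have hρy := rhoN_pos hn y
  have hxy' := rhoN_le_mul_rhoN hB hx hxy
  have hyx := rhoN_le_mul_rhoN (B := B * (2 * B + 4)) (by positivity) hy (by
    rw [abs_sub_comm, mul_assoc]; exact hxy.trans (mul_le_mul_of_nonneg_left hxy' hB))
  have hball : ballIntegral w y (rhoN n y) ≤ D * ballIntegral w x (rhoN n x) := by
    refine (hL.ballIntegral_mono hw0 hρy.le ?_).trans (hdoubling x hx _ hρx)
    have := abs_le.1 hxy
    constructor <;> nlinarith
  have hinv : (rhoN n y)⁻¹ ≤ (2 * B + 4) * (rhoN n x)⁻¹ := by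
    rw [← div_eq_mul_inv, le_div_iff₀ hρx, ← div_eq_inv_mul, div_le_iff₀ hρy]; linarith
  rw [wAvg_eq, wAvg_eq]
  calc (rhoN n y)⁻¹ * ballIntegral w y (rhoN n y)
      ≤ (2 * B + 4) * (rhoN n x)⁻¹ * (D * ballIntegral w x (rhoN n x)) :=
        mul_le_mul hinv hball (hL.ballIntegral_nonneg hρy.le) (by positivity)
    _ = (2 * B + 4) * D * ((rhoN n x)⁻¹ * ballIntegral w x (rhoN n x)) := by ring

lemma wStar_of_equivBy_wAvg {M : ℕ} {z : Fin M → ℝ} (hL : AStarWith w L) (hw0 : ZeroOutside w)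
    {c₁ c₂ : ℝ} (hc₁ : 0 < c₁) (hc₂ : 0 < c₂) (H : ∀ n : ℕ, 1 ≤ n →
      ∀ x ∈ Iah M z 1 (1 / n), c₁ * wAvg w n x ≤ w x ∧ w x ≤ c₂ * wAvg w n x) :
    WStar M z w := by
  obtain ⟨K₁, hK₁, hK₁'⟩ := hL.exists_wAvg_le_mul_wAvg hw0 (by norm_num : (0 : ℝ) ≤ 4)
  obtain ⟨K₂, hK₂, hK₂'⟩ := hL.exists_wAvg_le_mul_wAvg hw0 (by norm_num : (0 : ℝ) ≤ 4 * 12)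
  refine ⟨⟨L, hL⟩, c₁ / (c₂ * (K₁ + K₂)), by positivity,
    fun ε hε x y hx hy hxy hdist => ?_⟩
  obtain ⟨n, hn, hsub, hxy4⟩ := exists_nat_uIcc_subset_Iah hε hx hy hxy hdist
  have hyx : |y - x| ≤ 4 * 12 * rhoN n y := by
    rw [abs_sub_comm, mul_assoc]
    exact hxy4.trans (mul_le_mul_of_nonneg_left
      ((rhoN_le_mul_rhoN (by norm_num) hx hxy4).trans_eq (by norm_num)) (by norm_num))
  have hwy := EquivBy.mul_le_mul hc₁.le hc₂.le hK₁.le (H n hn x (hsub left_mem_uIcc))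
    (H n hn y (hsub right_mem_uIcc)) (hK₁' n hn x hx y hy hxy4)
  have hwx := EquivBy.mul_le_mul hc₁.le hc₂.le hK₂.le (H n hn y (hsub right_mem_uIcc))
    (H n hn x (hsub left_mem_uIcc)) (hK₂' n hn y hy x hx hyx)
  have := mul_nonneg (mul_nonneg hc₂.le hK₁.le) (hL.2.1 y)
  have := mul_nonneg (mul_nonneg hc₂.le hK₂.le) (hL.2.1 x)
  rw [inv_div, div_mul_eq_mul_div, div_mul_eq_mul_div, div_le_iff₀ (by positivity),
    le_div_iff₀ hc₁]
  constructor <;> linarith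

end AStarWith

theorem stmt_3_general (M : ℕ) (z : Fin M → ℝ)
    (w : ℝ → ℝ) (hw : AStar w) (hw0 : ZeroOutside w) :
    List.TFAE
      [ WStar M z w,
        ∃ c : ℝ, 0 < c ∧ ∀ n : ℕ, 1 ≤ n → ∀ x y : ℝ,
          uIcc x y ⊆ Iah M z 1 (1 / n) → |x - y| ≤ rhoN n x →
          c * w y ≤ w x ∧ w x ≤ c⁻¹ * w y,
        ∃ N : ℕ, ∃ c : ℝ, 0 < c ∧ ∀ n : ℕ, N ≤ n → ∀ x y : ℝ,
          uIcc x y ⊆ Iah M z 1 (1 / n) → |x - y| ≤ rhoN n x →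
          c * w y ≤ w x ∧ w x ≤ c⁻¹ * w y,
        ∀ A B : ℝ, 0 < A → 0 < B → ∃ c : ℝ, 0 < c ∧ ∀ n : ℕ, 1 ≤ n → ∀ x y : ℝ,
          uIcc x y ⊆ Iah M z A (1 / n) → |x - y| ≤ B * rhoN n x →
          c * w y ≤ w x ∧ w x ≤ c⁻¹ * w y,
        ∀ A : ℝ, 0 < A → ∃ c₁ c₂ : ℝ, 0 < c₁ ∧ 0 < c₂ ∧ ∀ n : ℕ, 1 ≤ n →
          ∀ x ∈ Iah M z A (1 / n), c₁ * wAvg w n x ≤ w x ∧ w x ≤ c₂ * wAvg w n x ] := by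
  obtain ⟨L, hL⟩ := hw
  tfae_have 1 → 2 := by
    rintro ⟨-, c, hc, H⟩
    refine ⟨c, hc, fun n hn x y hxy hdist => H (1 / n) (one_div_pos.2 (by exact_mod_cast hn)) x y
      (hxy left_mem_uIcc).1 (hxy right_mem_uIcc).1 (by rwa [rho_one_div]) fun j u hu => ?_⟩
    simpa only [one_mul] using (hxy hu).2 j
  tfae_have 2 → 3 := fun ⟨c, hc, H⟩ => ⟨1, c, hc, H⟩
  tfae_have 3 → 4 := fun ⟨_, _, hc, H⟩ _ _ hA hB =>
    exists_comparable_of_eventually_comparable hc H hA hB.le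
  tfae_have 4 → 5 := fun H A hA => by
    obtain ⟨c, hc, H'⟩ := H (A / 2) 1 (by positivity) one_pos
    exact hL.exists_equivBy_wAvg hw0 hA hc fun n hn x y hxy hdist => (H' n hn x y hxy hdist).1
  tfae_have 5 → 1 := fun H => by
    obtain ⟨c₁, c₂, hc₁, hc₂, H'⟩ := H 1 one_pos
    exact hL.wStar_of_equivBy_wAvg hw0 hc₁ hc₂ H'
  tfae_finish

/-- equivalent characterizations of the class `W*(Z)`. -/
theorem stmt_3 (M : ℕ) (hM : 0 < M) (z : Fin M → ℝ) (hz : StrictMono z)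
    (hzI : ∀ j, z j ∈ Icc (-1 : ℝ) 1) (w : ℝ → ℝ) (hw : AStar w) (hw0 : ZeroOutside w) :
    List.TFAE
      [ WStar M z w,
        ∃ c : ℝ, 0 < c ∧ ∀ n : ℕ, 1 ≤ n → ∀ x y : ℝ,
          uIcc x y ⊆ Iah M z 1 (1 / n) → |x - y| ≤ rhoN n x →
          c * w y ≤ w x ∧ w x ≤ c⁻¹ * w y,
        ∃ N : ℕ, ∃ c : ℝ, 0 < c ∧ ∀ n : ℕ, N ≤ n → ∀ x y : ℝ,
          uIcc x y ⊆ Iah M z 1 (1 / n) → |x - y| ≤ rhoN n x →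
          c * w y ≤ w x ∧ w x ≤ c⁻¹ * w y,
        ∀ A B : ℝ, 0 < A → 0 < B → ∃ c : ℝ, 0 < c ∧ ∀ n : ℕ, 1 ≤ n → ∀ x y : ℝ,
          uIcc x y ⊆ Iah M z A (1 / n) → |x - y| ≤ B * rhoN n x →
          c * w y ≤ w x ∧ w x ≤ c⁻¹ * w y,
        ∀ A : ℝ, 0 < A → ∃ c₁ c₂ : ℝ, 0 < c₁ ∧ 0 < c₂ ∧ ∀ n : ℕ, 1 ≤ n →
          ∀ x ∈ Iah M z A (1 / n), c₁ * wAvg w n x ≤ w x ∧ w x ≤ c₂ * wAvg w n x ] :=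
  stmt_3_general M z w hw hw0
end
end
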